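/- The (n−1)-dimensional volume of the parallelepiped (generalized rhombohedron) spanned by the vectors k_1 = ω_1 − ω_2, k_2 = ω_2 − ω_3, …, k_{n−1} = ω_{n−1} − ω_n equals √(2/(n+1)). -/

import Mathlib

/-!
Each `k_a = ω_a - ω_{a+1}` is the vector `𝟙 / (n + 1) - e_a`, so the Gram matrix of
`k_1, …, k_{n-1}` is `I - J / (n + 1)` with `J` the all-ones matrix. This is a rank-one
perturbation of the identity, with determinant `1 - (n - 1) / (n + 1) = 2 / (n + 1)`.
-/

/-- Fundamental weight `ω_i` of `A_n` in `ℝ^{n+1}`. -/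
noncomputable def omegaA (n : ℕ) (i : ℕ) : EuclideanSpace ℝ (Fin (n + 1)) :=
  WithLp.toLp 2 (fun j : Fin (n + 1) => if (j : ℕ) < i then ((n : ℝ) + 1 - (i : ℝ)) / ((n : ℝ) + 1)
           else -(i : ℝ) / ((n : ℝ) + 1))

section
variable {ι : Type*} [Fintype ι] [DecidableEq ι]

theorem inner_const_sub_indicator (c : ℝ) (a b : ι) :
    inner ℝ (WithLp.toLp 2 fun j => c - if j = a then 1 else 0 : EuclideanSpace ℝ ι)
      (WithLp.toLp 2 fun j => c - if j = b then 1 else 0)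
      = Fintype.card ι * c ^ 2 - 2 * c + if a = b then 1 else 0 := by
  simp only [PiLp.inner_apply, RCLike.inner_apply, conj_trivial, sub_mul, mul_sub, ite_mul,
    mul_ite, one_mul, mul_one, zero_mul, mul_zero, Finset.sum_sub_distrib, Finset.sum_const,
    Finset.sum_ite_eq', Finset.mem_univ, if_true, Finset.card_univ, nsmul_eq_mul]
  split_ifs <;> ring

theorem Matrix.det_one_sub_const {R : Type*} [CommRing R] (c : R) :
    (Matrix.of fun i j : ι => (if i = j then 1 else 0) - c).det = 1 - Fintype.card ι * c := by
  have h : (Matrix.of fun i j : ι => (if i = j then 1 else 0) - c)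
      = 1 + Matrix.replicateCol Unit (fun _ : ι => -c)
        * Matrix.replicateRow Unit (fun _ : ι => (1 : R)) := by
    ext i j
    simp [Matrix.one_apply, Matrix.mul_apply, sub_eq_add_neg]
  rw [h, Matrix.det_one_add_replicateCol_mul_replicateRow]
  simp [dotProduct, sub_eq_add_neg]

end

theorem omegaA_sub_omegaA_succ (n : ℕ) (a : Fin (n + 1)) :
    omegaA n a - omegaA n (a + 1)
      = WithLp.toLp 2 fun j => 1 / ((n : ℝ) + 1) - if j = a then 1 else 0 := by
  ext j
  simp only [omegaA, PiLp.sub_apply, ← Fin.val_inj]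
  push_cast
  rcases lt_trichotomy (j : ℕ) a with h | h | h
  · rw [if_pos h, if_pos (by omega), if_neg h.ne]
    ring
  · rw [if_neg h.not_lt, if_pos (by omega), if_pos h]
    field_simp
    ring
  · rw [if_neg (by omega), if_neg (by omega), if_neg h.ne']
    ring

theorem inner_omegaA_sub_succ (n : ℕ) (a b : Fin (n + 1)) :
    inner ℝ (omegaA n a - omegaA n (a + 1)) (omegaA n b - omegaA n (b + 1))
      = (if a = b then 1 else 0) - 1 / ((n : ℝ) + 1) := by
  rw [omegaA_sub_omegaA_succ, omegaA_sub_omegaA_succ, inner_const_sub_indicator,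
    Fintype.card_fin]
  push_cast
  field_simp
  ring

/-- The `(n-1)`-dimensional volume (square root of the Gram determinant) of the
parallelepiped spanned by `k_1 = ω_1 - ω_2, …, k_{n-1} = ω_{n-1} - ω_n` equals
`√(2/(n+1))`. -/
theorem volume_rhombohedronA (n : ℕ) (hn : 2 ≤ n) :
    Real.sqrt (Matrix.det (Matrix.of fun i j : Fin (n - 1) =>
      (inner ℝ (omegaA n ((i : ℕ) + 1) - omegaA n ((i : ℕ) + 2))
             (omegaA n ((j : ℕ) + 1) - omegaA n ((j : ℕ) + 2)) : ℝ)))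
    = Real.sqrt (2 / ((n : ℝ) + 1)) := by
  have hgram (i j : Fin (n - 1)) :
      inner ℝ (omegaA n ((i : ℕ) + 1) - omegaA n ((i : ℕ) + 2))
        (omegaA n ((j : ℕ) + 1) - omegaA n ((j : ℕ) + 2))
        = (if i = j then 1 else 0) - 1 / ((n : ℝ) + 1) :=
    (inner_omegaA_sub_succ n ⟨i + 1, by omega⟩ ⟨j + 1, by omega⟩).trans
      (by simp [Fin.ext_iff])
  simp only [hgram, Matrix.det_one_sub_const, Fintype.card_fin]
  congr 1
  rw [Nat.cast_sub (by omega : 1 ≤ n)]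
  field_simp
  ring
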